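/- Let n ≥ 2, let m₁, …, mₙ be positive integers, let β ∈ ℤ₊ⁿ be a multiindex with β₁/m₁ + … + βₙ/mₙ < 1, fix j ∈ {1, …, n}, and set ε = m₁·(1 − Σ_{i=1}^{n} βᵢ/mᵢ) > 0. Define u_j on ℝⁿ ∖ {0} by u_j(ξ) = [ ∏_{i≠j} (2πi ξᵢ)^{βᵢ} ] · (2πi ξⱼ)^{βⱼ+3mⱼ} / [ Σ_{l=1}^{n} (2πi ξ_l)^{4m_l} ]. Then for every A ≥ 1 there exist constants c, C > 0 such that for all (ξ₁, ξ₂) ∈ ℝ² with |ξ₂| ≥ 1 and A^{−1} |ξ₂|^{m₂/m₁} ≤ |ξ₁| ≤ A |ξ₂|^{m₂/m₁}: c · |ξ₁|^{−ε} ≤ | u_j( ξ₁, ξ₂, |ξ₂|^{m₂/m₃}, …, |ξ₂|^{m₂/mₙ} ) | ≤ C · |ξ₁|^{−ε}. -/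

import Mathlib

noncomputable section

/-- The symbol `u_j(ξ) = [∏_{i≠j}(2πiξᵢ)^{βᵢ}] (2πiξⱼ)^{βⱼ+3mⱼ} / Σ_l (2πiξ_l)^{4m_l}`. -/
noncomputable def uSym {n : ℕ} (m β : Fin n → ℕ) (j : Fin n) (ξ : Fin n → ℝ) : ℂ :=
  ((∏ i ∈ Finset.univ.erase j, (2 * Real.pi * Complex.I * ξ i) ^ (β i)) *
      (2 * Real.pi * Complex.I * ξ j) ^ (β j + 3 * m j)) /
    (∑ i, (2 * Real.pi * Complex.I * ξ i) ^ (4 * m i))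

/-- The point `(ξ₁, ξ₂, |ξ₂|^{m₂/m₃}, …, |ξ₂|^{m₂/mₙ}) ∈ ℝⁿ`. -/
noncomputable def uPoint (n : ℕ) (hn : 2 ≤ n) (m : Fin n → ℕ) (ξ₁ ξ₂ : ℝ) : Fin n → ℝ :=
  fun i => if (i : ℕ) = 0 then ξ₁
    else if (i : ℕ) = 1 then ξ₂
    else |ξ₂| ^ ((m ⟨1, by omega⟩ : ℝ) / (m i))

private lemma aux_pow (r t e : ℝ) (ht : 0 ≤ t) (k : ℕ) :
    (r * t ^ e) ^ k = r ^ k * t ^ (e * (k:ℝ)) := by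
  rw [mul_pow]; congr 1
  rw [← Real.rpow_natCast (t ^ e) k, ← Real.rpow_mul ht]

set_option maxHeartbeats 1000000 in
/-- Two-sided estimate `|u_j| ≍ |ξ₁|^{−ε}`, `ε = m₁(1 − Σᵢβᵢ/mᵢ) > 0`, on the anisotropic
region `|ξ₂| ≥ 1`, `A⁻¹|ξ₂|^{m₂/m₁} ≤ |ξ₁| ≤ A|ξ₂|^{m₂/m₁}`. -/
theorem stmt14 (n : ℕ) (hn : 2 ≤ n) (m : Fin n → ℕ) (hm : ∀ i, 0 < m i)
    (β : Fin n → ℕ) (hβ : ∑ i, (β i : ℝ) / (m i) < 1) (j : Fin n) :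
    ∀ A : ℝ, 1 ≤ A → ∃ c C : ℝ, 0 < c ∧ 0 < C ∧
      ∀ ξ₁ ξ₂ : ℝ, 1 ≤ |ξ₂| →
        A⁻¹ * |ξ₂| ^ ((m ⟨1, by omega⟩ : ℝ) / (m ⟨0, by omega⟩)) ≤ |ξ₁| →
        |ξ₁| ≤ A * |ξ₂| ^ ((m ⟨1, by omega⟩ : ℝ) / (m ⟨0, by omega⟩)) →
          c * |ξ₁| ^ (-((m ⟨0, by omega⟩ : ℝ) * (1 - ∑ i, (β i : ℝ) / (m i)))) ≤
              ‖uSym m β j (uPoint n hn m ξ₁ ξ₂)‖ ∧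
            ‖uSym m β j (uPoint n hn m ξ₁ ξ₂)‖ ≤
              C * |ξ₁| ^ (-((m ⟨0, by omega⟩ : ℝ) * (1 - ∑ i, (β i : ℝ) / (m i)))) := by
  intro A hA
  have hπ : (0:ℝ) < 2 * Real.pi := by positivity
  have hA0 : (0:ℝ) < A := lt_of_lt_of_le one_pos hA
  have hAi0 : (0:ℝ) < A⁻¹ := by positivity
  have hAi1 : A⁻¹ ≤ 1 := inv_le_one_of_one_le₀ hA
  set i0 : Fin n := ⟨0, by omega⟩ with hi0def
  set i1 : Fin n := ⟨1, by omega⟩ with hi1def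
  set S : ℝ := ∑ i, (β i : ℝ) / (m i) with hSdef
  set m1 : ℝ := (m i0 : ℝ) with hm1def
  set m2 : ℝ := (m i1 : ℝ) with hm2def
  have hm1 : (0:ℝ) < m1 := by rw [hm1def]; exact_mod_cast hm i0
  have hm2 : (0:ℝ) < m2 := by rw [hm2def]; exact_mod_cast hm i1
  have hmi : ∀ i : Fin n, (0:ℝ) < (m i : ℝ) := fun i => by exact_mod_cast hm i
  set ε : ℝ := m1 * (1 - S) with hεdef
  have hε : 0 < ε := by
    apply mul_pos hm1; linarith
  set cN : ℝ := (∏ i, (2 * Real.pi * A⁻¹) ^ (β i)) * (2 * Real.pi * A⁻¹) ^ (3 * m j)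
    with hcNdef
  set CN : ℝ := (∏ i, (2 * Real.pi * A) ^ (β i)) * (2 * Real.pi * A) ^ (3 * m j) with hCNdef
  set cD : ℝ := ∑ i, (2 * Real.pi * A⁻¹) ^ (4 * m i) with hcDdef
  set CD : ℝ := ∑ i, (2 * Real.pi * A) ^ (4 * m i) with hCDdef
  set Aε : ℝ := A ^ ε with hAεdef
  have hcN : 0 < cN := by
    refine mul_pos (Finset.prod_pos fun i _ => pow_pos (by positivity) _) (pow_pos (by positivity) _)
  have hCN : 0 < CN := by
    refine mul_pos (Finset.prod_pos fun i _ => pow_pos (by positivity) _) (pow_pos (by positivity) _)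
  have hcD : 0 < cD := Finset.sum_pos (fun i _ => by positivity) ⟨i0, Finset.mem_univ _⟩
  have hCD : 0 < CD := Finset.sum_pos (fun i _ => by positivity) ⟨i0, Finset.mem_univ _⟩
  have hAε : 0 < Aε := Real.rpow_pos_of_pos hA0 _
  refine ⟨cN / CD / Aε, CN / cD * Aε, by positivity, by positivity, ?_⟩
  intro ξ₁ ξ₂ ht h1 h2
  set t : ℝ := |ξ₂| with htdef
  have ht0 : (0:ℝ) < t := lt_of_lt_of_le one_pos ht
  set p : Fin n → ℝ := uPoint n hn m ξ₁ ξ₂ with hpdef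
  -- coordinate bounds
  have hcoord : ∀ i : Fin n,
      A⁻¹ * t ^ (m2 / (m i)) ≤ |p i| ∧ |p i| ≤ A * t ^ (m2 / (m i)) := by
    intro i
    have htp : (0:ℝ) < t ^ (m2 / (m i)) := Real.rpow_pos_of_pos ht0 _
    by_cases hzero : (i : ℕ) = 0
    · have hii : i = i0 := Fin.ext hzero
      have hp : p i = ξ₁ := by simp [hpdef, uPoint, hzero]
      rw [hp, hii]
      exact ⟨h1, h2⟩
    · by_cases hone : (i : ℕ) = 1
      · have hii : i = i1 := Fin.ext hone
        have hp : p i = ξ₂ := by simp [hpdef, uPoint, hzero, hone]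
        have he : m2 / (m i) = 1 := by
          rw [hii]; exact div_self hm2.ne'
        rw [hp, he, Real.rpow_one, ← htdef]
        constructor
        · nlinarith
        · nlinarith
      · have hp : p i = t ^ (m2 / (m i)) := by
          simp [hpdef, uPoint, hzero, hone, htdef, hm2def, hi1def]
        rw [hp, abs_of_nonneg (Real.rpow_nonneg ht0.le _)]
        constructor
        · nlinarith
        · nlinarith
  -- the denominator as a real number
  set D : ℝ := ∑ i, (2 * Real.pi * (p i)) ^ (4 * m i) with hDdef
  have hden : (∑ i, (2 * Real.pi * Complex.I * (p i : ℂ)) ^ (4 * m i)) = ((D : ℝ) : ℂ) := by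
    rw [hDdef]
    push_cast
    refine Finset.sum_congr rfl fun i _ => ?_
    have h : (2 * Real.pi * Complex.I * (p i : ℂ)) = ((2 * Real.pi * p i : ℝ) : ℂ) * Complex.I := by
      push_cast; ring
    rw [h, mul_pow, pow_mul Complex.I 4 (m i), Complex.I_pow_four, one_pow, mul_one]
    push_cast; ring
  -- termwise D is an even power, hence abs
  have hDterm : ∀ i : Fin n, (2 * Real.pi * p i) ^ (4 * m i) = (2 * Real.pi * |p i|) ^ (4 * m i) := by
    intro i
    rw [← Even.pow_abs ⟨2 * m i, by ring⟩ (2 * Real.pi * p i), abs_mul, abs_of_pos hπ]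
  -- bounds on D
  have hDub : D ≤ CD * t ^ ((4:ℝ) * m2) := by
    rw [hDdef, hCDdef, Finset.sum_mul]
    refine Finset.sum_le_sum fun i _ => ?_
    rw [hDterm i]
    calc (2 * Real.pi * |p i|) ^ (4 * m i)
        ≤ (2 * Real.pi * (A * t ^ (m2 / (m i)))) ^ (4 * m i) := by
          refine pow_le_pow_left₀ (by positivity) ?_ _
          exact mul_le_mul_of_nonneg_left (hcoord i).2 hπ.le
      _ = (2 * Real.pi * A) ^ (4 * m i) * t ^ ((4:ℝ) * m2) := by
          rw [show 2 * Real.pi * (A * t ^ (m2 / (m i))) = (2 * Real.pi * A) * t ^ (m2 / (m i)) by ring,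
            aux_pow _ _ _ ht0.le]
          congr 2
          have := (hmi i).ne'
          field_simp
          push_cast; ring
  have hDlb : cD * t ^ ((4:ℝ) * m2) ≤ D := by
    rw [hDdef, hcDdef, Finset.sum_mul]
    refine Finset.sum_le_sum fun i _ => ?_
    rw [hDterm i]
    calc (2 * Real.pi * A⁻¹) ^ (4 * m i) * t ^ ((4:ℝ) * m2)
        = (2 * Real.pi * (A⁻¹ * t ^ (m2 / (m i)))) ^ (4 * m i) := by
          rw [show 2 * Real.pi * (A⁻¹ * t ^ (m2 / (m i))) = (2 * Real.pi * A⁻¹) * t ^ (m2 / (m i)) by ring,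
            aux_pow _ _ _ ht0.le]
          congr 2
          have := (hmi i).ne'
          field_simp
          push_cast; ring
      _ ≤ (2 * Real.pi * |p i|) ^ (4 * m i) := by
          refine pow_le_pow_left₀ (by positivity) ?_ _
          exact mul_le_mul_of_nonneg_left (hcoord i).1 hπ.le
  have hD0 : 0 < D := lt_of_lt_of_le (by positivity) hDlb
  -- norm formula
  have hnorm : ‖uSym m β j p‖ =
      (∏ i, (2 * Real.pi * |p i|) ^ (β i)) * (2 * Real.pi * |p j|) ^ (3 * m j) / D := by
    rw [uSym, hden, norm_div, Complex.norm_real, Real.norm_eq_abs, abs_of_pos hD0,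
      norm_mul, norm_prod]
    simp only [norm_pow]
    have hfac : ∀ x : ℝ, ‖(2 * Real.pi * Complex.I * (x:ℂ))‖ = 2 * Real.pi * |x| := by
      intro x
      simp [norm_mul, Complex.norm_real, Real.norm_eq_abs, abs_of_pos Real.pi_pos]
    simp only [hfac]
    rw [pow_add, ← mul_assoc, Finset.prod_erase_mul Finset.univ _ (Finset.mem_univ j)]
  -- product bounds
  have hsum : (∑ x : Fin n, m2 / (m x) * (β x : ℝ)) = m2 * S := by
    rw [hSdef, Finset.mul_sum]; exact Finset.sum_congr rfl fun i _ => by ring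
  have hprodub : (∏ i, (2 * Real.pi * |p i|) ^ (β i)) ≤
      (∏ i, (2 * Real.pi * A) ^ (β i)) * t ^ (m2 * S) := by
    calc (∏ i, (2 * Real.pi * |p i|) ^ (β i))
        ≤ ∏ i, ((2 * Real.pi * A) * t ^ (m2 / (m i))) ^ (β i) := by
          refine Finset.prod_le_prod (fun i _ => by positivity) fun i _ => ?_
          refine pow_le_pow_left₀ (by positivity) ?_ _
          calc 2 * Real.pi * |p i| ≤ 2 * Real.pi * (A * t ^ (m2 / (m i))) :=
                mul_le_mul_of_nonneg_left (hcoord i).2 hπ.le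
            _ = (2 * Real.pi * A) * t ^ (m2 / (m i)) := by ring
      _ = (∏ i, (2 * Real.pi * A) ^ (β i)) * t ^ (m2 * S) := by
          rw [Finset.prod_congr rfl (fun i _ => aux_pow (2 * Real.pi * A) t _ ht0.le (β i)),
            Finset.prod_mul_distrib, ← Real.rpow_sum_of_pos ht0]
          rw [hsum]
  have hprodlb : (∏ i, (2 * Real.pi * A⁻¹) ^ (β i)) * t ^ (m2 * S) ≤
      (∏ i, (2 * Real.pi * |p i|) ^ (β i)) := by
    calc (∏ i, (2 * Real.pi * A⁻¹) ^ (β i)) * t ^ (m2 * S)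
        = ∏ i, ((2 * Real.pi * A⁻¹) * t ^ (m2 / (m i))) ^ (β i) := by
          rw [Finset.prod_congr rfl (fun i _ => aux_pow (2 * Real.pi * A⁻¹) t _ ht0.le (β i)),
            Finset.prod_mul_distrib, ← Real.rpow_sum_of_pos ht0]
          rw [hsum]
      _ ≤ ∏ i, (2 * Real.pi * |p i|) ^ (β i) := by
          refine Finset.prod_le_prod (fun i _ => by positivity) fun i _ => ?_
          refine pow_le_pow_left₀ (by positivity) ?_ _
          calc (2 * Real.pi * A⁻¹) * t ^ (m2 / (m i))
              = 2 * Real.pi * (A⁻¹ * t ^ (m2 / (m i))) := by ring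
            _ ≤ 2 * Real.pi * |p i| := mul_le_mul_of_nonneg_left (hcoord i).1 hπ.le
  -- extra factor bounds
  have hXub : (2 * Real.pi * |p j|) ^ (3 * m j) ≤ (2 * Real.pi * A) ^ (3 * m j) * t ^ ((3:ℝ) * m2) := by
    calc (2 * Real.pi * |p j|) ^ (3 * m j)
        ≤ ((2 * Real.pi * A) * t ^ (m2 / (m j))) ^ (3 * m j) := by
          refine pow_le_pow_left₀ (by positivity) ?_ _
          calc 2 * Real.pi * |p j| ≤ 2 * Real.pi * (A * t ^ (m2 / (m j))) :=
                mul_le_mul_of_nonneg_left (hcoord j).2 hπ.le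
            _ = (2 * Real.pi * A) * t ^ (m2 / (m j)) := by ring
      _ = (2 * Real.pi * A) ^ (3 * m j) * t ^ ((3:ℝ) * m2) := by
          rw [aux_pow _ _ _ ht0.le]
          congr 2
          have := (hmi j).ne'
          field_simp
          push_cast; ring
  have hXlb : (2 * Real.pi * A⁻¹) ^ (3 * m j) * t ^ ((3:ℝ) * m2) ≤ (2 * Real.pi * |p j|) ^ (3 * m j) := by
    calc (2 * Real.pi * A⁻¹) ^ (3 * m j) * t ^ ((3:ℝ) * m2)
        = ((2 * Real.pi * A⁻¹) * t ^ (m2 / (m j))) ^ (3 * m j) := by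
          rw [aux_pow _ _ _ ht0.le]
          congr 2
          have := (hmi j).ne'
          field_simp
          push_cast; ring
      _ ≤ (2 * Real.pi * |p j|) ^ (3 * m j) := by
          refine pow_le_pow_left₀ (by positivity) ?_ _
          calc (2 * Real.pi * A⁻¹) * t ^ (m2 / (m j))
              = 2 * Real.pi * (A⁻¹ * t ^ (m2 / (m j))) := by ring
            _ ≤ 2 * Real.pi * |p j| := mul_le_mul_of_nonneg_left (hcoord j).1 hπ.le
  -- combine exponents
  have hcomb : m2 * S + (3:ℝ) * m2 - (4:ℝ) * m2 = -(m2 * (1 - S)) := by ring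
  -- main two-sided estimate in terms of t
  have hmainub : ‖uSym m β j p‖ ≤ (CN / cD) * t ^ (-(m2 * (1 - S))) := by
    rw [hnorm]
    have h1' : (∏ i, (2 * Real.pi * |p i|) ^ (β i)) * (2 * Real.pi * |p j|) ^ (3 * m j)
        ≤ CN * t ^ (m2 * S + (3:ℝ) * m2) := by
      rw [hCNdef, Real.rpow_add ht0]
      calc (∏ i, (2 * Real.pi * |p i|) ^ (β i)) * (2 * Real.pi * |p j|) ^ (3 * m j)
          ≤ ((∏ i, (2 * Real.pi * A) ^ (β i)) * t ^ (m2 * S)) *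
              ((2 * Real.pi * A) ^ (3 * m j) * t ^ ((3:ℝ) * m2)) := by
            refine mul_le_mul hprodub hXub (by positivity) ?_
            positivity
        _ = (∏ i, (2 * Real.pi * A) ^ (β i)) * (2 * Real.pi * A) ^ (3 * m j) *
              (t ^ (m2 * S) * t ^ ((3:ℝ) * m2)) := by ring
    calc (∏ i, (2 * Real.pi * |p i|) ^ (β i)) * (2 * Real.pi * |p j|) ^ (3 * m j) / D
        ≤ CN * t ^ (m2 * S + (3:ℝ) * m2) / (cD * t ^ ((4:ℝ) * m2)) := by
          exact div_le_div₀ (by positivity) h1' (by positivity) hDlb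
      _ = (CN / cD) * t ^ (-(m2 * (1 - S))) := by
          rw [← hcomb, Real.rpow_sub ht0, div_mul_div_comm]
  have hmainlb : (cN / CD) * t ^ (-(m2 * (1 - S))) ≤ ‖uSym m β j p‖ := by
    rw [hnorm]
    have h1' : cN * t ^ (m2 * S + (3:ℝ) * m2) ≤
        (∏ i, (2 * Real.pi * |p i|) ^ (β i)) * (2 * Real.pi * |p j|) ^ (3 * m j) := by
      rw [hcNdef, Real.rpow_add ht0]
      calc (∏ i, (2 * Real.pi * A⁻¹) ^ (β i)) * (2 * Real.pi * A⁻¹) ^ (3 * m j) *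
              (t ^ (m2 * S) * t ^ ((3:ℝ) * m2))
          = ((∏ i, (2 * Real.pi * A⁻¹) ^ (β i)) * t ^ (m2 * S)) *
              ((2 * Real.pi * A⁻¹) ^ (3 * m j) * t ^ ((3:ℝ) * m2)) := by ring
        _ ≤ (∏ i, (2 * Real.pi * |p i|) ^ (β i)) * (2 * Real.pi * |p j|) ^ (3 * m j) := by
            refine mul_le_mul hprodlb hXlb (by positivity) ?_
            exact Finset.prod_nonneg fun i _ => by positivity
    calc (cN / CD) * t ^ (-(m2 * (1 - S)))
        = cN * t ^ (m2 * S + (3:ℝ) * m2) / (CD * t ^ ((4:ℝ) * m2)) := by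
          rw [← hcomb, Real.rpow_sub ht0, div_mul_div_comm]
      _ ≤ (∏ i, (2 * Real.pi * |p i|) ^ (β i)) * (2 * Real.pi * |p j|) ^ (3 * m j) / D := by
          refine div_le_div₀ ?_ h1' hD0 hDub
          exact mul_nonneg (Finset.prod_nonneg fun i _ => by positivity) (by positivity)
  -- relate t-powers to |ξ₁|-powers
  have hxpos : 0 < |ξ₁| := lt_of_lt_of_le (by positivity) h1
  have hexp : m2 / m1 * (-ε) = -(m2 * (1 - S)) := by
    rw [hεdef]; field_simp
  have hxlow : |ξ₁| ^ (-ε) ≤ Aε * t ^ (-(m2 * (1 - S))) := by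
    have h := Real.rpow_le_rpow_of_nonpos (by positivity) h1 (neg_nonpos.mpr hε.le)
    calc |ξ₁| ^ (-ε) ≤ (A⁻¹ * t ^ (m2 / m1)) ^ (-ε) := h
      _ = (A⁻¹) ^ (-ε) * t ^ (-(m2 * (1 - S))) := by
          rw [Real.mul_rpow hAi0.le (Real.rpow_nonneg ht0.le _), ← Real.rpow_mul ht0.le, hexp]
      _ = Aε * t ^ (-(m2 * (1 - S))) := by
          rw [Real.inv_rpow hA0.le, Real.rpow_neg hA0.le, inv_inv, hAεdef]
  have hxhigh : t ^ (-(m2 * (1 - S))) ≤ Aε * |ξ₁| ^ (-ε) := by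
    have h := Real.rpow_le_rpow_of_nonpos hxpos h2 (neg_nonpos.mpr hε.le)
    have h' : (A * t ^ (m2 / m1)) ^ (-ε) = Aε⁻¹ * t ^ (-(m2 * (1 - S))) := by
      rw [Real.mul_rpow hA0.le (Real.rpow_nonneg ht0.le _), ← Real.rpow_mul ht0.le, hexp,
        Real.rpow_neg hA0.le, hAεdef]
    rw [h'] at h
    have h2' := mul_le_mul_of_nonneg_left h hAε.le
    calc t ^ (-(m2 * (1 - S))) = Aε * (Aε⁻¹ * t ^ (-(m2 * (1 - S)))) :=
          (mul_inv_cancel_left₀ hAε.ne' _).symm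
      _ ≤ Aε * |ξ₁| ^ (-ε) := h2'
  constructor
  · calc cN / CD / Aε * |ξ₁| ^ (-ε)
        ≤ cN / CD / Aε * (Aε * t ^ (-(m2 * (1 - S)))) := by
          exact mul_le_mul_of_nonneg_left hxlow (div_pos (div_pos hcN hCD) hAε).le
      _ = cN / CD * t ^ (-(m2 * (1 - S))) := by
          rw [div_mul_eq_mul_div, mul_comm Aε, ← mul_assoc, mul_div_assoc,
            div_self hAε.ne', mul_one]
      _ ≤ ‖uSym m β j p‖ := hmainlb
  · calc ‖uSym m β j p‖ ≤ CN / cD * t ^ (-(m2 * (1 - S))) := hmainub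
      _ ≤ CN / cD * (Aε * |ξ₁| ^ (-ε)) := by
          exact mul_le_mul_of_nonneg_left hxhigh (div_pos hCN hcD).le
      _ = CN / cD * Aε * |ξ₁| ^ (-ε) := by ring


end
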